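/- For every natural number n ≥ 1: I_{2n−1} = 2^{2n−1} · ( (1 − 2^{2n}) / (4n) ) · π^{2n} · |B_{2n}|, i.e. ∫₀¹ (2·log u)^{2n−1} / (1 − u²) du = 2^{2n−1} · ((1 − 2^{2n})/(4n)) · π^{2n} · |B_{2n}|. -/

import Mathlib

open MeasureTheory Real Set

lemma exp_neg_image : (fun t : ℝ => Real.exp (-t)) '' Set.Ioi 0 = Set.Ioo 0 1 := by
  ext u
  simp only [Set.mem_image, Set.mem_Ioi, Set.mem_Ioo]
  constructor
  · rintro ⟨t, ht, rfl⟩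
    exact ⟨Real.exp_pos _, by rw [Real.exp_lt_one_iff]; linarith⟩
  · rintro ⟨h0, h1⟩
    exact ⟨-Real.log u, neg_pos.mpr (Real.log_neg h0 h1), by rw [neg_neg, Real.exp_log h0]⟩

lemma exp_neg_deriv : ∀ t ∈ Set.Ioi (0:ℝ),
    HasDerivWithinAt (fun t : ℝ => Real.exp (-t)) (-Real.exp (-t)) (Set.Ioi 0) t := by
  intro t _
  have h : HasDerivAt (fun t : ℝ => Real.exp (-t)) (-Real.exp (-t)) t := by
    have := (Real.hasDerivAt_exp (-t)).comp t (hasDerivAt_neg t)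
    simp only [mul_neg, mul_one] at this
    exact this
  exact h.hasDerivWithinAt

lemma exp_neg_inj : Set.InjOn (fun t : ℝ => Real.exp (-t)) (Set.Ioi 0) :=
  fun _ _ _ _ h => neg_injective (Real.exp_injective h)

lemma integrand_eq (m j : ℕ) {t : ℝ} (ht : t ∈ Set.Ioi (0:ℝ)) :
    |(-Real.exp (-t))| • ((Real.exp (-t))^m * (-Real.log (Real.exp (-t)))^j)
      = t ^ ((j:ℝ) + 1 - 1) * Real.exp (-(((m:ℝ)+1) * t)) := by
  rw [smul_eq_mul, abs_neg, Real.abs_exp, Real.log_exp, neg_neg,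
    show ((j:ℝ) + 1 - 1) = ((j:ℕ):ℝ) by ring, Real.rpow_natCast,
    ← Real.exp_nat_mul, ← mul_assoc, ← Real.exp_add,
    show (-t + (m:ℝ) * -t) = -(((m:ℝ)+1) * t) by ring, mul_comm]

lemma momint (m j : ℕ) :
    ∫ u in Set.Ioo (0:ℝ) 1, u^m * (-Real.log u)^j = (Nat.factorial j : ℝ) / ((m:ℝ)+1)^(j+1) := by
  rw [← exp_neg_image,
    integral_image_eq_integral_abs_deriv_smul measurableSet_Ioi exp_neg_deriv exp_neg_inj]
  rw [setIntegral_congr_fun measurableSet_Ioi (fun t ht => integrand_eq m j ht)]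
  rw [Real.integral_rpow_mul_exp_neg_mul_Ioi (by positivity) (by positivity),
    Real.Gamma_nat_eq_factorial,
    show ((j:ℝ) + 1) = ((j+1:ℕ):ℝ) by push_cast; ring, Real.rpow_natCast,
    one_div, inv_pow, inv_mul_eq_div]

lemma mom_integrable (m j : ℕ) :
    MeasureTheory.IntegrableOn (fun u : ℝ => u^m * (-Real.log u)^j) (Set.Ioo 0 1) := by
  rw [← exp_neg_image,
    integrableOn_image_iff_integrableOn_abs_deriv_smul measurableSet_Ioi exp_neg_deriv exp_neg_inj]
  have h : MeasureTheory.IntegrableOn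
      (fun t : ℝ => t ^ ((j:ℝ)) * Real.exp (-((m:ℝ)+1) * t ^ (1:ℝ))) (Set.Ioi 0) :=
    integrableOn_rpow_mul_exp_neg_mul_rpow
      (by linarith [Nat.cast_nonneg (α:=ℝ) j]) zero_lt_one (by positivity)
  refine h.congr_fun (fun t ht => ?_) measurableSet_Ioi
  beta_reduce
  rw [integrand_eq m j ht, Real.rpow_one, show ((j:ℝ)+1-1) = ((j:ℕ):ℝ) by ring,
    Real.rpow_natCast, neg_mul]

lemma odd_sum_aux {f : ℕ → ℝ} {Z c : ℝ} (hZ : HasSum f Z)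
    (hc : ∀ k, f (2*k) = c * f k) :
    HasSum (fun k => f (2*k+1)) (Z - c*Z) := by
  have he : HasSum (fun k => f (2*k)) (c * Z) := by
    have h := hZ.mul_left c
    exact (funext hc : (fun k => f (2*k)) = fun k => c * f k) ▸ h
  have hsum_odd : Summable (fun k => f (2*k+1)) :=
    hZ.summable.comp_injective (i := fun k => 2*k+1) (fun a b hab => by simp only at hab; omega)
  obtain ⟨S, hS⟩ := hsum_odd
  have hall : HasSum f (c*Z + S) := he.even_add_odd hS
  have h1 : c*Z + S = Z := hall.unique hZ
  have h2 : S = Z - c*Z := by linarith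
  exact h2 ▸ hS

lemma odd_sum (n : ℕ) (hn : 1 ≤ n) :
    HasSum (fun k : ℕ => 1 / (2*(k:ℝ)+1)^(2*n))
      ((1 - 1/(2:ℝ)^(2*n)) *
        ((-1:ℝ)^(n+1) * 2^(2*n-1) * Real.pi^(2*n) * ((bernoulli (2*n) : ℚ):ℝ)
          / (Nat.factorial (2*n)))) := by
  have hZ := hasSum_zeta_nat (k := n) (Nat.one_le_iff_ne_zero.mp hn)
  have hc : ∀ k : ℕ, (fun m : ℕ => 1/(m:ℝ)^(2*n)) (2*k)
      = (1/(2:ℝ)^(2*n)) * (fun m : ℕ => 1/(m:ℝ)^(2*n)) k := by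
    intro k
    simp only
    push_cast
    rw [mul_pow, one_div, one_div, one_div, mul_inv]
  have h := odd_sum_aux hZ hc
  have hfun2 : (fun k : ℕ => 1/(2*(k:ℝ)+1)^(2*n))
      = (fun k : ℕ => (fun m : ℕ => 1/(m:ℝ)^(2*n)) (2*k+1)) := by
    funext k; simp only; push_cast; ring
  rw [hfun2]
  convert h using 1
  ring

lemma bernoulli_abs (n : ℕ) (hn : 1 ≤ n) :
    |((bernoulli (2*n):ℚ):ℝ)| = (-1:ℝ)^(n+1) * ((bernoulli (2*n):ℚ):ℝ) := by
  have hZ := hasSum_zeta_nat (k := n) (by omega)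
  have h1 := le_hasSum hZ 1 (fun i _ => by positivity)
  simp only [Nat.cast_one, one_pow, div_one] at h1
  have hfac : (0:ℝ) < (Nat.factorial (2*n) : ℝ) := by positivity
  have h2 : (Nat.factorial (2*n) : ℝ)
      ≤ (-1:ℝ)^(n+1) * 2^(2*n-1) * Real.pi^(2*n) * ((bernoulli (2*n):ℚ):ℝ) :=
    (one_le_div hfac).mp h1
  have hc : (0:ℝ) < 2^(2*n-1) * Real.pi^(2*n) := by positivity
  have hpos : 0 < (-1:ℝ)^(n+1) * ((bernoulli (2*n):ℚ):ℝ) := by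
    by_contra h
    push_neg at h
    nlinarith [h2, hfac, mul_nonneg (neg_nonneg.mpr h) hc.le]
  rw [← abs_of_pos hpos, abs_mul, abs_pow, abs_neg, abs_one, one_pow, one_mul]

/-- `I j = ∫₀¹ (log(u²))^j / (1-u²) du`. -/
noncomputable def I (j : ℕ) : ℝ :=
  ∫ u in Set.Ioo (0:ℝ) 1, (Real.log (u^2))^j / (1 - u^2)

set_option maxHeartbeats 1000000 in
/-- `I_{2n-1} = 2^{2n-1}·((1-2^{2n})/(4n))·π^{2n}·|B_{2n}|` for `n ≥ 1`. -/
theorem I_odd_eval (n : ℕ) (hn : 1 ≤ n) :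
    I (2*n-1) = (2:ℝ)^(2*n-1) * ((1 - (2:ℝ)^(2*n))/(4*(n:ℝ))) * Real.pi^(2*n)
      * |((bernoulli (2*n) : ℚ) : ℝ)| := by
  set j := 2*n-1 with hjdef
  have hjodd : Odd j := ⟨n-1, by omega⟩
  have hj1 : j + 1 = 2*n := by omega
  -- pointwise identity for each term
  have hterm : ∀ k : ℕ, ∀ u ∈ Set.Ioo (0:ℝ) 1,
      (Real.log (u^2))^j * (u^2)^k = (-(2:ℝ)^j) * (u^(2*k) * (-Real.log u)^j) := by
    intro k u hu
    rw [show Real.log (u^2) = 2 * Real.log u by rw [Real.log_pow]; push_cast; ring,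
      ← pow_mul, show (2 * Real.log u) = (-2) * (-Real.log u) by ring, mul_pow,
      hjodd.neg_pow]
    ring
  -- measurability
  have hmeas : ∀ k : ℕ, MeasureTheory.AEStronglyMeasurable
      (fun u : ℝ => (Real.log (u^2))^j * (u^2)^k)
      (MeasureTheory.volume.restrict (Set.Ioo 0 1)) := by
    intro k
    exact (((Real.measurable_log.comp (measurable_id.pow_const 2)).pow_const j).mul
      ((measurable_id.pow_const 2).pow_const k)).aestronglyMeasurable
  -- integrability of each term
  have hInt : ∀ k : ℕ, MeasureTheory.Integrable
      (fun u : ℝ => (Real.log (u^2))^j * (u^2)^k)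
      (MeasureTheory.volume.restrict (Set.Ioo 0 1)) := by
    intro k
    have hgi : MeasureTheory.Integrable (fun u : ℝ => (2:ℝ)^j * (u^(2*k) * (-Real.log u)^j))
        (MeasureTheory.volume.restrict (Set.Ioo 0 1)) := (mom_integrable (2*k) j).const_mul _
    refine hgi.mono' (hmeas k) ?_
    filter_upwards [MeasureTheory.ae_restrict_mem measurableSet_Ioo] with u hu
    have hlog : 0 ≤ -Real.log u := by linarith [Real.log_neg hu.1 hu.2]
    have hy : 0 ≤ u^(2*k) * (-Real.log u)^j :=
      mul_nonneg (pow_nonneg hu.1.le _) (pow_nonneg hlog _)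
    rw [Real.norm_eq_abs, hterm k u hu, abs_mul, abs_neg, abs_pow, abs_two,
      abs_of_nonneg hy]
  -- value of each integral
  have hint : ∀ k : ℕ, (∫ u in Set.Ioo (0:ℝ) 1, (Real.log (u^2))^j * (u^2)^k)
      = (-(2:ℝ)^j * (Nat.factorial j : ℝ)) * (1 / (2*(k:ℝ)+1)^(2*n)) := by
    intro k
    rw [MeasureTheory.setIntegral_congr_fun measurableSet_Ioo (hterm k),
      MeasureTheory.integral_const_mul, momint (2*k) j, hj1]
    push_cast
    ring
  -- norm integral value for summability
  have hnorm : ∀ k : ℕ, (∫ u in Set.Ioo (0:ℝ) 1, ‖(Real.log (u^2))^j * (u^2)^k‖)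
      = ((2:ℝ)^j * (Nat.factorial j : ℝ)) * (1 / (2*(k:ℝ)+1)^(2*n)) := by
    intro k
    have heq : ∀ u ∈ Set.Ioo (0:ℝ) 1,
        ‖(Real.log (u^2))^j * (u^2)^k‖ = (2:ℝ)^j * (u^(2*k) * (-Real.log u)^j) := by
      intro u hu
      have hlog : 0 ≤ -Real.log u := by linarith [Real.log_neg hu.1 hu.2]
      have hy : 0 ≤ u^(2*k) * (-Real.log u)^j :=
        mul_nonneg (pow_nonneg hu.1.le _) (pow_nonneg hlog _)
      rw [Real.norm_eq_abs, hterm k u hu, abs_mul, abs_neg, abs_pow, abs_two,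
        abs_of_nonneg hy]
    rw [MeasureTheory.setIntegral_congr_fun measurableSet_Ioo heq,
      MeasureTheory.integral_const_mul, momint (2*k) j, hj1]
    push_cast
    ring
  have hOdd := odd_sum n hn
  -- the series of norms is summable
  have hc_summ : Summable (fun k : ℕ => ((2:ℝ)^j * (Nat.factorial j : ℝ)) * (1/(2*(k:ℝ)+1)^(2*n))) :=
    hOdd.summable.mul_left _
  -- rewrite the integrand as a series
  have hU : I j = ∫ u in Set.Ioo (0:ℝ) 1, ∑' k : ℕ, (Real.log (u^2))^j * (u^2)^k := by
    rw [I]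
    refine MeasureTheory.setIntegral_congr_fun measurableSet_Ioo (fun u hu => ?_) |>.symm
    have h1 : u^2 < 1 := by nlinarith [hu.1, hu.2]
    have h0 : (0:ℝ) ≤ u^2 := sq_nonneg u
    rw [tsum_mul_left, tsum_geometric_of_lt_one h0 h1, div_eq_mul_inv]
  -- swap integral and sum
  have hswap := MeasureTheory.integral_tsum (μ := MeasureTheory.volume.restrict (Set.Ioo 0 1))
    (f := fun k u => (Real.log (u^2))^j * (u^2)^k) hmeas ?_
  · rw [hU, hswap, tsum_congr hint, tsum_mul_left, hOdd.tsum_eq]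
    -- final arithmetic
    rw [bernoulli_abs n hn]
    have hfact : ((Nat.factorial (2*n)) : ℝ) = 2*(n:ℝ) * (Nat.factorial j : ℝ) := by
      rw [show 2*n = j+1 from hj1.symm, Nat.factorial_succ, hj1]
      push_cast
      ring
    rw [hfact, ← hj1, Nat.add_sub_cancel]
    have hF : (Nat.factorial j : ℝ) ≠ 0 := by positivity
    have hN : (n:ℝ) ≠ 0 := by positivity
    have h2 : ((2:ℝ)^(j+1)) ≠ 0 := by positivity
    field_simp
    ring
  · -- finiteness of the sum of lintegrals
    have hlint : ∀ k : ℕ, (∫⁻ u in Set.Ioo (0:ℝ) 1, ‖(Real.log (u^2))^j * (u^2)^k‖ₑ)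
        = ENNReal.ofReal (((2:ℝ)^j * (Nat.factorial j : ℝ)) * (1/(2*(k:ℝ)+1)^(2*n))) := by
      intro k
      rw [← MeasureTheory.ofReal_integral_norm_eq_lintegral_enorm (hInt k), hnorm k]
    rw [tsum_congr hlint,
      ← ENNReal.ofReal_tsum_of_nonneg (fun k => by positivity) hc_summ]
    exact ENNReal.ofReal_ne_top
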